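/- arXiv:1409.0321 — 2 statements merged into one kernel-verified Lean document; each statement's English description precedes it below -/
import Mathlib

section
/- For all bounded operators A, B on a complex Hilbert space: w(B*A) ≤ (1/4)‖AA* + BB*‖ + (1/2)·w(AB*), where w denotes the numerical radius. -/
/-!
Fix a unit vector `x` and put `c = ⟪B* A x, x⟫ = ⟪A x, B x⟫`. Rotating `B` by a unimodular `μ`
with `μ c = |c|` makes the cross term of `‖(A + μ B) x‖²` equal to `2|c|`, so by AM-GM
`4|c| ≤ ‖(A + μ B) x‖² ≤ ‖A + μ B‖² = ‖(A + μ B)*‖²`. For any `y`, expanding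
`‖A* y + μ̄ B* y‖²` bounds the last quantity by `‖A A* + B B*‖ + 2 w(A B*)`, since the square
terms add up to `⟪(A A* + B B*) y, y⟫` and the cross term is `⟪A B* y, y⟫` up to conjugation.
-/

open scoped ComplexConjugate

variable {H : Type*} [NormedAddCommGroup H] [InnerProductSpace ℂ H] [CompleteSpace H]

/-- The numerical radius of a bounded operator. -/
noncomputable def numRadius (A : H →L[ℂ] H) : ℝ :=
  sSup {t : ℝ | ∃ x : H, ‖x‖ = 1 ∧ t = ‖(inner ℂ (A x) x : ℂ)‖}

open ContinuousLinearMap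
open scoped InnerProductSpace

section

variable {𝕜 E : Type*} [RCLike 𝕜] [NormedAddCommGroup E] [InnerProductSpace 𝕜 E]

lemma norm_add_smul_sq_of_norm_eq_one (u v : E) {μ : 𝕜} (hμ : ‖μ‖ = 1) :
    ‖u + μ • v‖ ^ 2 = ‖u‖ ^ 2 + 2 * RCLike.re (μ * ⟪u, v⟫_𝕜) + ‖v‖ ^ 2 := by
  rw [norm_add_sq (𝕜 := 𝕜), inner_smul_right, norm_smul, hμ, one_mul]

lemma norm_add_smul_sq_le (u v : E) {μ : 𝕜} (hμ : ‖μ‖ = 1) :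
    ‖u + μ • v‖ ^ 2 ≤ ‖u‖ ^ 2 + 2 * ‖⟪u, v⟫_𝕜‖ + ‖v‖ ^ 2 := by
  have : RCLike.re (μ * ⟪u, v⟫_𝕜) ≤ ‖⟪u, v⟫_𝕜‖ := by
    simpa [hμ] using RCLike.re_le_norm (μ * ⟪u, v⟫_𝕜)
  rw [norm_add_smul_sq_of_norm_eq_one u v hμ]
  linarith

lemma four_mul_norm_inner_le_norm_add_smul_sq (u v : E) {μ : 𝕜} (hμ : ‖μ‖ = 1)
    (hμc : (‖⟪u, v⟫_𝕜‖ : 𝕜) = μ * ⟪u, v⟫_𝕜) :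
    4 * ‖⟪u, v⟫_𝕜‖ ≤ ‖u + μ • v‖ ^ 2 := by
  have hcs : ‖⟪u, v⟫_𝕜‖ ≤ ‖u‖ * ‖v‖ := norm_inner_le_norm u v
  rw [norm_add_smul_sq_of_norm_eq_one u v hμ, ← hμc, RCLike.ofReal_re]
  nlinarith [sq_nonneg (‖u‖ - ‖v‖)]

end

lemma ContinuousLinearMap.opNorm_sq_le_of_forall {𝕜 E F : Type*} [NontriviallyNormedField 𝕜]
    [SeminormedAddCommGroup E] [SeminormedAddCommGroup F] [NormedSpace 𝕜 E] [NormedSpace 𝕜 F]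
    (T : E →L[𝕜] F) {M : ℝ} (hM : 0 ≤ M) (h : ∀ y, ‖T y‖ ^ 2 ≤ M * ‖y‖ ^ 2) :
    ‖T‖ ^ 2 ≤ M := by
  have hT : ‖T‖ ≤ √M := T.opNorm_le_bound (Real.sqrt_nonneg M) fun y => by
    rw [← Real.sqrt_sq (norm_nonneg (T y)), ← Real.sqrt_sq (norm_nonneg y), ← Real.sqrt_mul hM]
    exact Real.sqrt_le_sqrt (h y)
  exact (Real.le_sqrt (norm_nonneg T) hM).mp hT

section NumericalRadius

omit [CompleteSpace H]

lemma numRadius_nonneg (T : H →L[ℂ] H) : 0 ≤ numRadius T :=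
  Real.sSup_nonneg (by rintro t ⟨x, -, rfl⟩; positivity)

lemma numRadius_le {T : H →L[ℂ] H} {M : ℝ} (hM : 0 ≤ M)
    (h : ∀ x : H, ‖x‖ = 1 → ‖⟪T x, x⟫_ℂ‖ ≤ M) : numRadius T ≤ M :=
  Real.sSup_le (by rintro t ⟨x, hx, rfl⟩; exact h x hx) hM

lemma norm_inner_le_numRadius (T : H →L[ℂ] H) {x : H} (hx : ‖x‖ = 1) :
    ‖⟪T x, x⟫_ℂ‖ ≤ numRadius T := by
  refine le_csSup ⟨‖T‖, ?_⟩ ⟨x, hx, rfl⟩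
  rintro t ⟨y, hy, rfl⟩
  calc ‖⟪T y, y⟫_ℂ‖ ≤ ‖T y‖ * ‖y‖ := norm_inner_le_norm (T y) y
    _ ≤ ‖T‖ := by simpa [hy] using T.unit_le_opNorm y hy.le

lemma norm_inner_le_numRadius_mul_sq (T : H →L[ℂ] H) (y : H) :
    ‖⟪T y, y⟫_ℂ‖ ≤ numRadius T * ‖y‖ ^ 2 := by
  rcases eq_or_ne y 0 with rfl | hy
  · simp
  set r : ℝ := ‖y‖⁻¹
  have hr : r ^ 2 * ‖y‖ ^ 2 = 1 := by
    rw [← mul_pow, inv_mul_cancel₀ (norm_ne_zero_iff.mpr hy), one_pow]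
  have hunit : ‖(r : ℂ) • y‖ = 1 := by simp [r, norm_smul, hy]
  have hscale : ⟪T ((r : ℂ) • y), (r : ℂ) • y⟫_ℂ = ((r ^ 2 : ℝ) : ℂ) * ⟪T y, y⟫_ℂ := by
    simp only [map_smul, inner_smul_left, inner_smul_right, Complex.conj_ofReal]
    push_cast
    ring
  have hw := norm_inner_le_numRadius T hunit
  rw [hscale, norm_mul, Complex.norm_real, Real.norm_of_nonneg (by positivity)] at hw
  calc ‖⟪T y, y⟫_ℂ‖ = r ^ 2 * ‖⟪T y, y⟫_ℂ‖ * ‖y‖ ^ 2 := by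
        linear_combination (-‖⟪T y, y⟫_ℂ‖) * hr
    _ ≤ numRadius T * ‖y‖ ^ 2 := by gcongr

end NumericalRadius

lemma norm_star_apply_sq (A : H →L[ℂ] H) (y : H) :
    ‖star A y‖ ^ 2 = RCLike.re ⟪(A * star A) y, y⟫_ℂ := by
  simpa [star_eq_adjoint] using apply_norm_sq_eq_inner_adjoint_left (adjoint A) y

lemma norm_star_apply_sq_add_le (A B : H →L[ℂ] H) (y : H) :
    ‖star A y‖ ^ 2 + ‖star B y‖ ^ 2 ≤ ‖A * star A + B * star B‖ * ‖y‖ ^ 2 := by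
  calc ‖star A y‖ ^ 2 + ‖star B y‖ ^ 2 = RCLike.re ⟪(A * star A + B * star B) y, y⟫_ℂ := by
        rw [add_apply, inner_add_left, map_add, norm_star_apply_sq, norm_star_apply_sq]
    _ ≤ ‖(A * star A + B * star B) y‖ * ‖y‖ := re_inner_le_norm _ _
    _ ≤ ‖A * star A + B * star B‖ * ‖y‖ * ‖y‖ := by gcongr; exact le_opNorm _ _
    _ = ‖A * star A + B * star B‖ * ‖y‖ ^ 2 := by ring

lemma norm_inner_star_apply_le_numRadius (A B : H →L[ℂ] H) (y : H) :
    ‖⟪star A y, star B y⟫_ℂ‖ ≤ numRadius (A * star B) * ‖y‖ ^ 2 := by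
  rw [star_eq_adjoint A, adjoint_inner_left, norm_inner_symm, ← mul_apply_eq_comp]
  exact norm_inner_le_numRadius_mul_sq (A * star B) y

lemma norm_add_smul_sq_le_norm_add_two_mul_numRadius (A B : H →L[ℂ] H) {μ : ℂ} (hμ : ‖μ‖ = 1) :
    ‖A + μ • B‖ ^ 2 ≤ ‖A * star A + B * star B‖ + 2 * numRadius (A * star B) := by
  have hw := numRadius_nonneg (A * star B)
  rw [← norm_star]
  refine opNorm_sq_le_of_forall _ (by positivity) fun y => ?_
  calc ‖star (A + μ • B) y‖ ^ 2 = ‖star A y + conj μ • star B y‖ ^ 2 := by simp [star_smul]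
    _ ≤ ‖star A y‖ ^ 2 + 2 * ‖⟪star A y, star B y⟫_ℂ‖ + ‖star B y‖ ^ 2 :=
        norm_add_smul_sq_le _ _ (by rwa [RCLike.norm_conj])
    _ ≤ (‖A * star A + B * star B‖ + 2 * numRadius (A * star B)) * ‖y‖ ^ 2 := by
        linarith [norm_star_apply_sq_add_le A B y, norm_inner_star_apply_le_numRadius A B y]

theorem statement10 (A B : H →L[ℂ] H) :
    numRadius (star B * A) ≤
      (1 / 4) * ‖A * star A + B * star B‖ + (1 / 2) * numRadius (A * star B) := by
  have hw := numRadius_nonneg (A * star B)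
  refine numRadius_le (by positivity) fun x hx => ?_
  obtain ⟨μ, hμ, hμc⟩ := Complex.exists_norm_eq_mul_self ⟪A x, B x⟫_ℂ
  have hc : ⟪(star B * A) x, x⟫_ℂ = ⟪A x, B x⟫_ℂ := by
    rw [mul_apply_eq_comp, star_eq_adjoint, adjoint_inner_left]
  have h4 : 4 * ‖⟪A x, B x⟫_ℂ‖ ≤ ‖A * star A + B * star B‖ + 2 * numRadius (A * star B) :=
    calc 4 * ‖⟪A x, B x⟫_ℂ‖ ≤ ‖(A + μ • B) x‖ ^ 2 :=
          four_mul_norm_inner_le_norm_add_smul_sq _ _ hμ hμc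
      _ ≤ ‖A + μ • B‖ ^ 2 := by gcongr; exact (A + μ • B).unit_le_opNorm x hx.le
      _ ≤ ‖A * star A + B * star B‖ + 2 * numRadius (A * star B) :=
        norm_add_smul_sq_le_norm_add_two_mul_numRadius A B hμ
  rw [hc]
  linarith
end

section
/- Let T = U|T| be the polar decomposition of a bounded operator T, let 0 ≤ α ≤ 1, and let T̃(α) = |T|^α U |T|^{1−α} be the generalized Aluthge transform. Then for every r ≥ 1: w(T)^r ≤ (1/4)‖ |T|^{2rα} + |T|^{2r(1−α)} ‖ + (1/2)·w(T̃(α))^r. -/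
open scoped ComplexConjugate
set_option synthInstance.maxHeartbeats 1000000

variable {H : Type*} [NormedAddCommGroup H] [InnerProductSpace ℂ H] [CompleteSpace H]

/-!
Write `T = W * X` with `X = |T|^α` self-adjoint and `W = U |T|^(1-α)`, so that `X * W = T̃(α)`.
Since `⟪T x, x⟫ = ⟪X x, W* x⟫`, after rotating `W` by a unimodular scalar the parallelogram
law gives `4 |⟪T x, x⟫| ≤ ‖(X + W*) x‖² ≤ ‖(X + W*)(X + W)‖ = ‖X² + W* W + X W + (X W)*‖`,
which is at most `‖|T|^(2α) + |T|^(2(1-α))‖ + 2 w(T̃(α))` because `U* U` is a projection, so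
`W* W ≤ |T|^(2(1-α))`. Convexity of `t ↦ t^r` reduces the `r`-th power version to
`‖f(|T|)‖^r ≤ 2^(r-1) ‖g(|T|)‖` for `f t = t^(2α) + t^(2(1-α))` and
`g t = t^(2rα) + t^(2r(1-α))`; this holds because the norm of `f(|T|)` is attained at a point of
the spectrum, where `f^r ≤ 2^(r-1) g` pointwise.
-/

open scoped NNReal

lemma isStarProjection_star_mul_self_of_mul_star_mul {R : Type*} [Semigroup R] [StarMul R] {u : R}
    (hu : u * star u * u = u) : IsStarProjection (star u * u) where
  isIdempotentElem := by
    rw [IsIdempotentElem, mul_assoc, ← mul_assoc u, hu]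
  isSelfAdjoint := .star_mul_self u

lemma star_mul_mul_le_of_mul_star_mul {R : Type*} [Ring R] [PartialOrder R] [StarRing R]
    [StarOrderedRing R] {u : R} (hu : u * star u * u = u) (b : R) :
    star (u * b) * (u * b) ≤ star b * b :=
  calc star (u * b) * (u * b) = star b * (star u * u) * b := by simp only [star_mul, mul_assoc]
    _ ≤ star b * 1 * b :=
      star_left_conjugate_le_conjugate (isStarProjection_star_mul_self_of_mul_star_mul hu).le_one b
    _ = star b * b := by rw [mul_one]

section CStarAlgebra

variable {A : Type*} [CStarAlgebra A] [PartialOrder A] [StarOrderedRing A]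

lemma CFC.rpow_add_of_nonneg (a : A) {x y : ℝ} (hx : 0 ≤ x) (hy : 0 ≤ y) :
    a ^ (x + y) = a ^ x * a ^ y := by
  simp only [CFC.rpow_def]
  rw [← cfc_mul _ _ a]
  exact cfc_congr fun z _ ↦ NNReal.rpow_add_of_nonneg z hx hy

lemma norm_cfc_rpow_le {a : A} {f g : ℝ≥0 → ℝ≥0} {r : ℝ} {C : ℝ≥0} (hr : r ≠ 0)
    (hfg : ∀ z ∈ spectrum ℝ≥0 a, f z ^ r ≤ C * g z)
    (hf : ContinuousOn f (spectrum ℝ≥0 a) := by cfc_cont_tac)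
    (hg : ContinuousOn g (spectrum ℝ≥0 a) := by cfc_cont_tac) (ha : 0 ≤ a := by cfc_tac) :
    ‖cfc f a‖ ^ r ≤ C * ‖cfc g a‖ := by
  cases subsingleton_or_nontrivial A
  · rw [Subsingleton.elim (cfc f a) 0, norm_zero, Real.zero_rpow hr]
    positivity
  obtain ⟨⟨z, hz, hfz⟩, -⟩ := IsGreatest.nnnorm_cfc_nnreal f a
  rw [← coe_nnnorm, ← coe_nnnorm, ← hfz, ← NNReal.coe_rpow, ← NNReal.coe_mul,
    NNReal.coe_le_coe]
  exact (hfg z hz).trans (mul_le_mul_right (apply_le_nnnorm_cfc_nnreal g a hz) C)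

lemma norm_rpow_add_rpow_rpow_le (a : A) {s t r : ℝ} (hs : 0 ≤ s) (ht : 0 ≤ t) (hr : 1 ≤ r)
    (ha : 0 ≤ a := by cfc_tac) :
    ‖a ^ s + a ^ t‖ ^ r ≤ 2 ^ (r - 1) * ‖a ^ (s * r) + a ^ (t * r)‖ := by
  have hcfc : ∀ {p q : ℝ}, 0 ≤ p → 0 ≤ q →
      a ^ p + a ^ q = cfc (fun z : ℝ≥0 ↦ z ^ p + z ^ q) a := fun hp hq ↦ by
      simp only [CFC.rpow_def]
      exact (cfc_add a _ _ (NNReal.continuous_rpow_const hp).continuousOn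
        (NNReal.continuous_rpow_const hq).continuousOn).symm
  rw [hcfc hs ht, hcfc (by positivity) (by positivity)]
  exact_mod_cast norm_cfc_rpow_le (a := a) (f := fun z ↦ z ^ s + z ^ t)
    (g := fun z ↦ z ^ (s * r) + z ^ (t * r)) (C := 2 ^ (r - 1)) (by positivity) (fun z _ ↦ by
    rw [NNReal.rpow_mul, NNReal.rpow_mul]
    exact NNReal.rpow_add_le_mul_rpow_add_rpow _ _ hr)
    (by fun_prop (disch := assumption)) (by fun_prop (disch := positivity))

end CStarAlgebra

section NumericalRadius

variable {E : Type*} [NormedAddCommGroup E] [InnerProductSpace ℂ E]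

lemma numRadius_nonneg_s13 (A : E →L[ℂ] E) : 0 ≤ numRadius A :=
  Real.sSup_nonneg fun _ ⟨_, _, ht⟩ ↦ ht ▸ norm_nonneg _

lemma norm_inner_le_numRadius_s13 (A : E →L[ℂ] E) {x : E} (hx : ‖x‖ = 1) :
    ‖inner ℂ (A x) x‖ ≤ numRadius A := by
  refine le_csSup ⟨‖A‖, ?_⟩ ⟨x, hx, rfl⟩
  rintro _ ⟨y, hy, rfl⟩
  calc ‖inner ℂ (A y) y‖ ≤ ‖A y‖ * ‖y‖ := norm_inner_le_norm _ _
    _ ≤ ‖A‖ * ‖y‖ * ‖y‖ := by gcongr; exact A.le_opNorm y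
    _ = ‖A‖ := by rw [hy, mul_one, mul_one]

lemma numRadius_le_s13 {A : E →L[ℂ] E} {C : ℝ} (hC : 0 ≤ C)
    (h : ∀ x : E, ‖x‖ = 1 → ‖inner ℂ (A x) x‖ ≤ C) : numRadius A ≤ C :=
  Real.sSup_le (fun _ ⟨x, hx, ht⟩ ↦ ht ▸ h x hx) hC

lemma norm_inner_le_numRadius_mul_sq_s13 (A : E →L[ℂ] E) (x : E) :
    ‖inner ℂ (A x) x‖ ≤ numRadius A * ‖x‖ ^ 2 := by
  rcases eq_or_ne x 0 with rfl | hx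
  · simp
  have hx' : 0 < ‖x‖ := norm_pos_iff.mpr hx
  have hunit :=
    norm_inner_le_numRadius_s13 A (x := (‖x‖⁻¹ : ℂ) • x) (by simp [norm_smul, hx'.ne'])
  simp only [map_smul, inner_smul_left, inner_smul_right, norm_mul, map_inv₀, Complex.conj_ofReal,
    norm_inv, Complex.norm_real, norm_norm] at hunit
  rw [inv_mul_le_iff₀ hx', inv_mul_le_iff₀ hx'] at hunit
  linarith [sq ‖x‖]

lemma numRadius_smul_le (c : ℂ) (A : E →L[ℂ] E) :
    numRadius (c • A) ≤ ‖c‖ * numRadius A :=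
  numRadius_le_s13 (mul_nonneg (norm_nonneg c) (numRadius_nonneg_s13 A)) fun x hx ↦ by
    rw [smul_apply, inner_smul_left, norm_mul, RCLike.norm_conj]
    exact mul_le_mul_of_nonneg_left (norm_inner_le_numRadius_s13 A hx) (norm_nonneg c)

lemma norm_add_star_le_two_mul_numRadius [CompleteSpace E] (A : E →L[ℂ] E) :
    ‖A + star A‖ ≤ 2 * numRadius A := by
  have hsymm : (A + star A).IsSymmetric := by
    simpa only [add_comm] using (IsSelfAdjoint.star_add_self A).isSymmetric
  rw [ContinuousLinearMap.norm_eq_iSup_rayleighQuotient _ hsymm]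
  refine ciSup_le fun x ↦ ?_
  have hre : RCLike.re (inner ℂ ((A + star A) x) x) = 2 * RCLike.re (inner ℂ (A x) x) := by
    rw [add_apply, inner_add_left, ContinuousLinearMap.star_eq_adjoint,
      ContinuousLinearMap.adjoint_inner_left, ← inner_conj_symm, map_add, RCLike.conj_re]
    ring
  rw [ContinuousLinearMap.rayleighQuotient, ContinuousLinearMap.reApplyInnerSelf_apply, hre,
    abs_div, abs_sq, abs_mul, abs_two]
  refine div_le_of_le_mul₀ (sq_nonneg _) (mul_nonneg two_pos.le (numRadius_nonneg_s13 A)) ?_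
  calc 2 * |RCLike.re (inner ℂ (A x) x)| ≤ 2 * ‖inner ℂ (A x) x‖ := by
        gcongr; exact RCLike.abs_re_le_norm _
    _ ≤ 2 * (numRadius A * ‖x‖ ^ 2) := by gcongr; exact norm_inner_le_numRadius_mul_sq_s13 A x
    _ = 2 * numRadius A * ‖x‖ ^ 2 := by ring

lemma four_mul_re_inner_mul_le [CompleteSpace E] (W X : E →L[ℂ] E) (hX : IsSelfAdjoint X)
    {x : E} (hx : ‖x‖ = 1) :
    4 * RCLike.re (inner ℂ ((W * X) x) x) ≤
      ‖X * X + star W * W‖ + 2 * numRadius (X * W) := by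
  have hinner : inner ℂ ((W * X) x) x = inner ℂ (X x) (star W x) := by
    rw [ContinuousLinearMap.star_eq_adjoint, ContinuousLinearMap.adjoint_inner_right]
    rfl
  have hpolar : 4 * RCLike.re (inner ℂ (X x) (star W x)) ≤ ‖X x + star W x‖ ^ 2 := by
    nlinarith [norm_add_sq (𝕜 := ℂ) (X x) (star W x),
      norm_sub_sq (𝕜 := ℂ) (X x) (star W x), sq_nonneg ‖X x - star W x‖]
  have happly : ‖X x + star W x‖ ≤ ‖X + star W‖ := by
    simpa [hx] using (X + star W).le_opNorm x
  have hcstar : ‖X + star W‖ ^ 2 = ‖(X * X + star W * W) + (X * W + star (X * W))‖ := by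
    have hexpand : (X + star W) * star (X + star W) =
        (X * X + star W * W) + (X * W + star (X * W)) := by
      simp only [star_add, star_mul, star_star, hX.star_eq]
      noncomm_ring
    rw [sq, ← CStarRing.norm_self_mul_star, hexpand]
  calc 4 * RCLike.re (inner ℂ ((W * X) x) x) ≤ ‖X + star W‖ ^ 2 := by
        rw [hinner]; exact hpolar.trans (by gcongr)
    _ ≤ ‖X * X + star W * W‖ + ‖X * W + star (X * W)‖ := hcstar ▸ norm_add_le _ _
    _ ≤ ‖X * X + star W * W‖ + 2 * numRadius (X * W) := by
        gcongr; exact norm_add_star_le_two_mul_numRadius _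

lemma numRadius_mul_le [CompleteSpace E] (W X : E →L[ℂ] E) (hX : IsSelfAdjoint X) :
    numRadius (W * X) ≤ 1 / 4 * ‖X * X + star W * W‖ + 1 / 2 * numRadius (X * W) := by
  refine numRadius_le_s13 (by positivity [numRadius_nonneg_s13 (X * W)]) fun x hx ↦ ?_
  obtain ⟨c, hc, hcx⟩ := Complex.exists_norm_eq_mul_self (inner ℂ ((W * X) x) x)
  have hbound := four_mul_re_inner_mul_le (conj c • W) X hX hx
  have hre : RCLike.re (inner ℂ ((conj c • W * X) x) x) = ‖inner ℂ ((W * X) x) x‖ := by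
    rw [smul_mul_assoc, smul_apply, inner_smul_left, Complex.conj_conj, ← hcx]
    rfl
  have hstar : star (conj c • W) * (conj c • W) = star W * W := by
    rw [star_smul, smul_mul_smul_comm, RCLike.star_def, Complex.conj_conj, Complex.mul_conj,
      Complex.normSq_eq_norm_sq, hc]
    simp
  have hnum : numRadius (X * (conj c • W)) ≤ numRadius (X * W) := by
    simpa [mul_smul_comm, hc] using numRadius_smul_le (conj c) (X * W)
  rw [hre, hstar] at hbound
  linarith

lemma numRadius_le_of_eq_partialIsometry_mul [CompleteSpace E] {T U R : E →L[ℂ] E}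
    (hR : 0 ≤ R) (hU : U * star U * U = U) (hT : T = U * R) {α : ℝ} (hα0 : 0 ≤ α) (hα1 : α ≤ 1) :
    numRadius T ≤ 1 / 4 * ‖R ^ (2 * α) + R ^ (2 * (1 - α))‖ +
      1 / 2 * numRadius (R ^ α * U * R ^ (1 - α)) := by
  have hα : 0 ≤ 1 - α := sub_nonneg.mpr hα1
  have hX : IsSelfAdjoint (R ^ α) := .of_nonneg CFC.rpow_nonneg
  have hY : IsSelfAdjoint (R ^ (1 - α)) := .of_nonneg CFC.rpow_nonneg
  have hfactor : T = (U * R ^ (1 - α)) * R ^ α := by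
    rwa [mul_assoc, ← CFC.rpow_add_of_nonneg R hα hα0, sub_add_cancel, CFC.rpow_one R]
  have hXX : R ^ α * R ^ α = R ^ (2 * α) := by rw [two_mul, CFC.rpow_add_of_nonneg R hα0 hα0]
  have hWW : star (U * R ^ (1 - α)) * (U * R ^ (1 - α)) ≤ R ^ (2 * (1 - α)) := by
    have h := star_mul_mul_le_of_mul_star_mul hU (R ^ (1 - α))
    rwa [hY.star_eq, ← CFC.rpow_add_of_nonneg R hα hα, ← two_mul] at h
  have hnorm : ‖R ^ α * R ^ α + star (U * R ^ (1 - α)) * (U * R ^ (1 - α))‖ ≤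
      ‖R ^ (2 * α) + R ^ (2 * (1 - α))‖ := by
    rw [hXX]
    exact CStarAlgebra.norm_le_norm_of_nonneg_of_le
      (add_nonneg CFC.rpow_nonneg (star_mul_self_nonneg _)) (by gcongr)
  calc numRadius T
      ≤ 1 / 4 * ‖R ^ α * R ^ α + star (U * R ^ (1 - α)) * (U * R ^ (1 - α))‖ +
        1 / 2 * numRadius (R ^ α * (U * R ^ (1 - α))) := hfactor ▸ numRadius_mul_le _ _ hX
    _ ≤ _ := by rw [mul_assoc (R ^ α) U]; gcongr

end NumericalRadius

lemma rpow_le_quarter_add_half_rpow {w n m k r : ℝ} (hw : 0 ≤ w) (hn : 0 ≤ n) (hk : 0 ≤ k)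
    (hr : 1 ≤ r) (hwnk : w ≤ 1 / 4 * n + 1 / 2 * k) (hnm : n ^ r ≤ 2 ^ (r - 1) * m) :
    w ^ r ≤ 1 / 4 * m + 1 / 2 * k ^ r := by
  have hconv : ((n / 2 + k) / 2) ^ r ≤ ((n / 2) ^ r + k ^ r) / 2 := by
    have := (convexOn_rpow hr).2 (Set.mem_Ici.mpr (by positivity : 0 ≤ n / 2))
      (Set.mem_Ici.mpr hk) (by norm_num : (0 : ℝ) ≤ 1 / 2) (by norm_num : (0 : ℝ) ≤ 1 / 2)
      (by norm_num)
    rw [smul_eq_mul, smul_eq_mul, smul_eq_mul, smul_eq_mul] at this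
    rw [show (n / 2 + k) / 2 = 1 / 2 * (n / 2) + 1 / 2 * k by ring,
      show ((n / 2) ^ r + k ^ r) / 2 = 1 / 2 * (n / 2) ^ r + 1 / 2 * k ^ r by ring]
    exact this
  have hhalf : (n / 2) ^ r ≤ m / 2 := by
    rw [Real.div_rpow hn zero_le_two, div_le_iff₀ (by positivity)]
    calc n ^ r ≤ 2 ^ (r - 1) * m := hnm
      _ = m / 2 * 2 ^ r := by rw [Real.rpow_sub_one two_ne_zero]; ring
  calc w ^ r ≤ ((n / 2 + k) / 2) ^ r := Real.rpow_le_rpow hw (by linarith) (by linarith)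
    _ ≤ ((n / 2) ^ r + k ^ r) / 2 := hconv
    _ ≤ 1 / 4 * m + 1 / 2 * k ^ r := by linarith

theorem statement13 (T U : H →L[ℂ] H) (hU : U * star U * U = U)
    (hT : T = U * CFC.sqrt (star T * T)) (α r : ℝ) (hα0 : 0 ≤ α) (hα1 : α ≤ 1) (hr : 1 ≤ r) :
    numRadius T ^ r ≤
      (1 / 4) * ‖CFC.sqrt (star T * T) ^ (2 * r * α) + CFC.sqrt (star T * T) ^ (2 * r * (1 - α))‖ +
        (1 / 2) * numRadius (CFC.sqrt (star T * T) ^ α * U * CFC.sqrt (star T * T) ^ (1 - α)) ^ r := by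
  have hR : 0 ≤ CFC.sqrt (star T * T) := CFC.sqrt_nonneg _
  have hw := numRadius_le_of_eq_partialIsometry_mul hR hU hT hα0 hα1
  have hM := norm_rpow_add_rpow_rpow_le (CFC.sqrt (star T * T))
    (by positivity : 0 ≤ 2 * α) (by linarith : 0 ≤ 2 * (1 - α)) hr
  rw [mul_right_comm 2 α, mul_right_comm 2 (1 - α)] at hM
  exact rpow_le_quarter_add_half_rpow (numRadius_nonneg_s13 T) (norm_nonneg _) (numRadius_nonneg_s13 _)
    hr hw hM
end
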